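/- Let σ, λ, κ, T > 0 and let H: ℝ → ℝ be continuously differentiable, convex, nondecreasing and Lipschitz continuous with constant L. For each integer N ≥ 1 set B_N := 2λ²N/(κ(N+1)²), define v^{(N)}(t, p) = (σ²/B_N) · log ∫_ℝ exp( (B_N/σ²) · H( p + σ√(T − t) z ) ) dγ(z) on [0,T) × ℝ with γ the standard Gaussian measure, and define the aggregate equilibrium trading speed Ẋ*_N(t, p) := (λ/(κ(N+1))) · ∂_p v^{(N)}(t, p). Then for every fixed (t, p) ∈ (0, T) × ℝ: Ẋ*_N(t, p) ≥ 0, the sequence N ↦ Ẋ*_N(t, p) is nonincreasing in N, and Ẋ*_N(t, p) → 0 as N → ∞. -/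

import Mathlib

open MeasureTheory ProbabilityTheory Real
open scoped NNReal

/-!
Differentiating under the Gaussian integral, `∂ₚv⁽ᴺ⁾(t,p)` is the mean of `H'(p + σ√(T-t) Z)`
under the standard Gaussian tilted by `exp (b_N H(p + σ√(T-t) Z))`, where `b_N = B_N / σ²`.
Since `0 ≤ H' ≤ L`, this mean lies in `[0, L]`; the prefactor `λ/(κ(N+1))` then gives
nonnegativity and the limit `0`. As `H'` and `H` are both nondecreasing, Chebyshev's correlation
inequality makes the tilted mean nondecreasing in the tilt `b`, and `B_N` decreases for `N ≥ 1`,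
so the speed decreases in `N`.
-/

section Chebyshev

variable {α : Type*} [MeasurableSpace α] {μ : Measure α} [SFinite μ]

lemma integral_prod_sub_mul_sub_mul {g u v : α → ℝ} (hu : Integrable u μ) (hv : Integrable v μ)
    (hgu : Integrable (fun x => g x * u x) μ) (hgv : Integrable (fun x => g x * v x) μ) :
    ∫ x : α × α, (g x.1 - g x.2) * (u x.1 * v x.2 - v x.1 * u x.2) ∂(μ.prod μ) =
      2 * ((∫ x, g x * u x ∂μ) * (∫ x, v x ∂μ) - (∫ x, g x * v x ∂μ) * ∫ x, u x ∂μ) := by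
  have h₁ := hgu.mul_prod hv
  have h₂ := hgv.mul_prod hu
  have h₃ := hu.mul_prod hgv
  have h₄ := hv.mul_prod hgu
  have hexpand : (fun x : α × α => (g x.1 - g x.2) * (u x.1 * v x.2 - v x.1 * u x.2)) =
      fun x => ((g x.1 * u x.1) * v x.2 - (g x.1 * v x.1) * u x.2) -
        (u x.1 * (g x.2 * v x.2) - v x.1 * (g x.2 * u x.2)) := by
    funext x; ring
  rw [hexpand, integral_sub (by exact h₁.sub h₂) (by exact h₃.sub h₄), integral_sub h₁ h₂,
    integral_sub h₃ h₄, integral_prod_mul (fun x => g x * u x) v,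
    integral_prod_mul (fun x => g x * v x) u,
    integral_prod_mul u (fun x => g x * v x), integral_prod_mul v (fun x => g x * u x)]
  ring

variable [LinearOrder α] {g h : α → ℝ}

/-- Chebyshev's integral inequality for the tilts of `μ` by `exp (b₁ h)` and `exp (b₂ h)`. -/
lemma integral_mul_exp_mul_le_of_monotone (hg : Monotone g) (hh : Monotone h) {b₁ b₂ : ℝ}
    (hb : b₁ ≤ b₂) (hI₁ : Integrable (fun z => exp (b₁ * h z)) μ)
    (hI₂ : Integrable (fun z => exp (b₂ * h z)) μ)
    (hJ₁ : Integrable (fun z => g z * exp (b₁ * h z)) μ)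
    (hJ₂ : Integrable (fun z => g z * exp (b₂ * h z)) μ) :
    (∫ z, g z * exp (b₁ * h z) ∂μ) * ∫ z, exp (b₂ * h z) ∂μ ≤
      (∫ z, g z * exp (b₂ * h z) ∂μ) * ∫ z, exp (b₁ * h z) ∂μ := by
  have hw : Monotone fun z => exp ((b₂ - b₁) * h z) := fun x y hxy =>
    exp_le_exp.2 (mul_le_mul_of_nonneg_left (hh hxy) (sub_nonneg.2 hb))
  have htilt : ∀ z, exp (b₂ * h z) = exp (b₁ * h z) * exp ((b₂ - b₁) * h z) := fun z => by
    rw [← exp_add]; ring_nf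
  have hpos : 0 ≤ ∫ x : α × α, (g x.1 - g x.2) *
      (exp (b₂ * h x.1) * exp (b₁ * h x.2) - exp (b₁ * h x.1) * exp (b₂ * h x.2)) ∂(μ.prod μ) := by
    refine integral_nonneg fun x => ?_
    have hcorr := (hg.monovary hw).sub_mul_sub_nonneg x.2 x.1
    rw [htilt, htilt]
    calc (0 : ℝ) ≤ exp (b₁ * h x.1) * exp (b₁ * h x.2) *
          ((g x.1 - g x.2) * (exp ((b₂ - b₁) * h x.1) - exp ((b₂ - b₁) * h x.2))) := by
          positivity
      _ = _ := by ring
  rw [integral_prod_sub_mul_sub_mul hI₂ hI₁ hJ₂ hJ₁] at hpos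
  linarith

end Chebyshev

lemma integrable_exp_gaussianReal_of_lipschitzWith {m : ℝ} {s : ℝ≥0} {K : ℝ≥0} {f : ℝ → ℝ}
    (hf : LipschitzWith K f) : Integrable (fun z => exp (f z)) (gaussianReal m s) := by
  have habs : Integrable (fun z => exp (K * |z|)) (gaussianReal m s) :=
    integrable_exp_mul_abs (X := id) (integrable_exp_mul_gaussianReal _)
      (integrable_exp_mul_gaussianReal _)
  refine (habs.const_mul (exp (f 0))).mono' (continuous_exp.comp hf.continuous).aestronglyMeasurable
    (ae_of_all _ fun z => ?_)
  rw [norm_of_nonneg (exp_pos _).le, ← exp_add, exp_le_exp]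
  have := hf.dist_le_mul z 0
  rw [dist_eq, dist_eq, sub_zero] at this
  linarith [(abs_le.1 this).2]

lemma hasDerivAt_integral_exp_comp_add_mul {μ : Measure ℝ} {K : ℝ≥0} {f : ℝ → ℝ}
    (hfd : Differentiable ℝ f) (hf : LipschitzWith K f) (c p : ℝ)
    (hint : Integrable (fun z => exp (f (p + c * z))) μ) :
    HasDerivAt (fun q => ∫ z, exp (f (q + c * z)) ∂μ)
      (∫ z, deriv f (p + c * z) * exp (f (p + c * z)) ∂μ) p := by
  have hfc := hf.continuous
  have hf'm := measurable_deriv f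
  have hbound : ∀ z, ∀ q ∈ Metric.ball p 1,
      ‖deriv f (q + c * z) * exp (f (q + c * z))‖ ≤ K * exp K * exp (f (p + c * z)) := by
    intro z q hq
    have hdist : dist (q + c * z) (p + c * z) ≤ 1 := by
      rw [dist_add_right]; exact (Metric.mem_ball.1 hq).le
    have hshift : f (q + c * z) ≤ f (p + c * z) + K := by
      have := (hf.dist_le_mul _ _).trans (mul_le_of_le_one_right K.2 hdist)
      linarith [(abs_le.1 (dist_eq _ _ ▸ this)).2]
    rw [norm_mul, norm_of_nonneg (exp_pos _).le, mul_assoc, ← exp_add, add_comm (K : ℝ)]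
    exact mul_le_mul (norm_deriv_le_of_lipschitz hf) (exp_le_exp.2 hshift) (exp_pos _).le K.2
  refine (hasDerivAt_integral_of_dominated_loc_of_deriv_le (Metric.ball_mem_nhds p one_pos)
    (.of_forall fun q => (by fun_prop : Continuous _).aestronglyMeasurable) hint
    (by fun_prop : Measurable _).aestronglyMeasurable (ae_of_all _ (hbound ·))
    (hint.const_mul _) (ae_of_all _ fun z q _ => ?_)).2
  have := ((hfd _).hasDerivAt.comp q ((hasDerivAt_id q).add_const (c * z))).exp
  simpa [mul_comm] using this

section TiltedMean

variable {α : Type*} [MeasurableSpace α] {μ : Measure α} {g h : α → ℝ}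

/-- `∫ g ∂(μ.tilted (b • h))`, written as a quotient of integrals against `μ`. -/
noncomputable def tiltedMean (μ : Measure α) (h g : α → ℝ) (b : ℝ) : ℝ :=
  (∫ z, g z * exp (b * h z) ∂μ) / ∫ z, exp (b * h z) ∂μ

lemma tiltedMean_mem_Icc [NeZero μ] {m M b : ℝ} (hg : ∀ z, g z ∈ Set.Icc m M)
    (hI : Integrable (fun z => exp (b * h z)) μ)
    (hJ : Integrable (fun z => g z * exp (b * h z)) μ) :
    tiltedMean μ h g b ∈ Set.Icc m M := by
  have hpos := integral_exp_pos hI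
  have hlower : ∫ z, m * exp (b * h z) ∂μ ≤ ∫ z, g z * exp (b * h z) ∂μ :=
    integral_mono (hI.const_mul m) hJ fun z =>
      mul_le_mul_of_nonneg_right (hg z).1 (exp_pos _).le
  have hupper : ∫ z, g z * exp (b * h z) ∂μ ≤ ∫ z, M * exp (b * h z) ∂μ :=
    integral_mono hJ (hI.const_mul M) fun z =>
      mul_le_mul_of_nonneg_right (hg z).2 (exp_pos _).le
  rw [integral_const_mul] at hlower hupper
  exact ⟨(le_div_iff₀ hpos).2 hlower, (div_le_iff₀ hpos).2 hupper⟩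

lemma monotone_tiltedMean [SFinite μ] [NeZero μ] [LinearOrder α] (hg : Monotone g)
    (hh : Monotone h) (hI : ∀ b, Integrable (fun z => exp (b * h z)) μ)
    (hJ : ∀ b, Integrable (fun z => g z * exp (b * h z)) μ) :
    Monotone (tiltedMean μ h g) := fun b₁ b₂ hb => by
  rw [tiltedMean, tiltedMean, div_le_div_iff₀ (integral_exp_pos (hI b₁))
    (integral_exp_pos (hI b₂))]
  exact integral_mul_exp_mul_le_of_monotone hg hh hb (hI b₁) (hI b₂) (hJ b₁) (hJ b₂)

end TiltedMean

lemma deriv_inv_mul_log_integral_exp {μ : Measure ℝ} [NeZero μ] {K : ℝ≥0} {H : ℝ → ℝ}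
    (hHd : Differentiable ℝ H) (hH : LipschitzWith K H) {b : ℝ} (hb : b ≠ 0) (c p : ℝ)
    (hint : Integrable (fun z => exp (b * H (p + c * z))) μ) :
    deriv (fun q => b⁻¹ * log (∫ z, exp (b * H (q + c * z)) ∂μ)) p =
      tiltedMean μ (fun z => H (p + c * z)) (fun z => deriv H (p + c * z)) b := by
  have hD := hasDerivAt_integral_exp_comp_add_mul (hHd.const_mul b)
    ((lipschitzWith_smul b).comp hH) c p hint
  simp only [deriv_const_mul b (hHd _), mul_assoc, integral_const_mul] at hD
  rw [((hD.log (integral_exp_pos hint).ne').const_mul b⁻¹).deriv, tiltedMean]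
  field_simp

lemma deriv_mem_Icc_of_monotone_of_lipschitzWith {K : ℝ≥0} {f : ℝ → ℝ} (hmono : Monotone f)
    (hf : LipschitzWith K f) (x : ℝ) : deriv f x ∈ Set.Icc 0 (K : ℝ) :=
  ⟨hmono.deriv_nonneg, (le_abs_self _).trans (norm_deriv_le_of_lipschitz hf)⟩

lemma antitoneOn_div_add_one_sq : AntitoneOn (fun x : ℝ => x / (x + 1) ^ 2) (Set.Ici 1) := by
  intro x hx y hy hxy
  simp only [Set.mem_Ici] at hx hy
  rw [div_le_div_iff₀ (by positivity) (by positivity)]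
  nlinarith [mul_nonneg (sub_nonneg.2 hxy) (by nlinarith : (0 : ℝ) ≤ x * y - 1)]

theorem stmt_17_general (σ lam κ T L : ℝ) (hσ : 0 < σ) (hlam : 0 < lam) (hκ : 0 < κ)
    (hL : 0 ≤ L)
    (H : ℝ → ℝ) (hH : ContDiff ℝ 1 H) (hconv : ConvexOn ℝ Set.univ H)
    (hmono : Monotone H) (hHL : LipschitzWith L.toNNReal H)
    (B : ℕ → ℝ) (hB : ∀ N : ℕ, B N = 2 * lam ^ 2 * N / (κ * ((N : ℝ) + 1) ^ 2))
    (v : ℕ → ℝ → ℝ → ℝ)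
    (hv : ∀ N : ℕ, 1 ≤ N → ∀ t p : ℝ, v N t p =
      (σ ^ 2 / B N) * Real.log
        (∫ z, Real.exp ((B N / σ ^ 2) * H (p + σ * Real.sqrt (T - t) * z))
          ∂(gaussianReal 0 1)))
    (Xdot : ℕ → ℝ → ℝ → ℝ)
    (hX : ∀ (N : ℕ) (t p : ℝ),
      Xdot N t p = (lam / (κ * ((N : ℝ) + 1))) * deriv (fun q => v N t q) p)
    (t p : ℝ) :
    (∀ N : ℕ, 1 ≤ N → 0 ≤ Xdot N t p) ∧
    (∀ N M : ℕ, 1 ≤ N → N ≤ M → Xdot M t p ≤ Xdot N t p) ∧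
    Filter.Tendsto (fun N : ℕ => Xdot N t p) Filter.atTop (nhds 0) := by
  have hc : 0 ≤ σ * √(T - t) := by positivity
  set c := σ * √(T - t)
  set mean := tiltedMean (gaussianReal 0 1) (fun z => H (p + c * z)) (fun z => deriv H (p + c * z))
  have hHd : Differentiable ℝ H := hH.differentiable one_ne_zero
  have hH' := deriv_mem_Icc_of_monotone_of_lipschitzWith hmono hHL
  rw [Real.coe_toNNReal L hL] at hH'
  have hshift : Monotone fun z => p + c * z := (monotone_id.const_mul hc).const_add p
  have hI (b : ℝ) : Integrable (fun z => exp (b * H (p + c * z))) (gaussianReal 0 1) :=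
    integrable_exp_gaussianReal_of_lipschitzWith ((lipschitzWith_smul b).comp
      (hHL.comp ((LipschitzWith.const p).add (lipschitzWith_smul c))))
  have hJ (b : ℝ) : Integrable (fun z => deriv H (p + c * z) * exp (b * H (p + c * z)))
      (gaussianReal 0 1) :=
    (hI b).bdd_mul (by fun_prop) (ae_of_all _ fun _ => norm_deriv_le_of_lipschitz hHL)
  have hmean (b : ℝ) : mean b ∈ Set.Icc 0 L := tiltedMean_mem_Icc (fun _ => hH' _) (hI b) (hJ b)
  have hmean_mono : Monotone mean :=
    monotone_tiltedMean ((monotoneOn_univ.1 (hconv.monotoneOn_deriv fun x _ => hHd x)).comp hshift)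
      (hmono.comp hshift) hI hJ
  have hXdot {N : ℕ} (hN : 1 ≤ N) : Xdot N t p = lam / (κ * (N + 1)) * mean (B N / σ ^ 2) := by
    have hN' : (0 : ℝ) < N := by exact_mod_cast hN
    have hb : B N / σ ^ 2 ≠ 0 := by rw [hB]; positivity
    have hv' : (fun q => v N t q) = fun q =>
        (B N / σ ^ 2)⁻¹ * log (∫ z, exp (B N / σ ^ 2 * H (q + c * z)) ∂(gaussianReal 0 1)) := by
      funext q; rw [hv N hN t q, inv_div]
    rw [hX, hv', deriv_inv_mul_log_integral_exp hHd hHL hb c p (hI _)]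
  have hB_anti {N M : ℕ} (hN : 1 ≤ N) (hNM : N ≤ M) : B M ≤ B N := by
    have hN' : (1 : ℝ) ≤ N := by exact_mod_cast hN
    have hNM' : (N : ℝ) ≤ M := by exact_mod_cast hNM
    have hB' (K : ℕ) : B K = 2 * lam ^ 2 / κ * (K / (K + 1) ^ 2) := by rw [hB]; field_simp
    rw [hB', hB']
    exact mul_le_mul_of_nonneg_left (antitoneOn_div_add_one_sq hN' (hN'.trans hNM') hNM')
      (by positivity)
  have hXdot_nonneg {N : ℕ} (hN : 1 ≤ N) : 0 ≤ Xdot N t p := by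
    rw [hXdot hN]; exact mul_nonneg (by positivity) (hmean _).1
  refine ⟨fun N hN => hXdot_nonneg hN, fun N M hN hNM => ?_, ?_⟩
  · rw [hXdot hN, hXdot (hN.trans hNM)]
    exact mul_le_mul (by gcongr)
      (hmean_mono (div_le_div_of_nonneg_right (hB_anti hN hNM) (sq_nonneg σ)))
      (hmean _).1 (by positivity)
  · have hcoef : Filter.Tendsto (fun N : ℕ => lam / (κ * (N + 1)) * L) Filter.atTop (nhds 0) := by
      simpa using (tendsto_const_nhds.div_atTop ((Filter.tendsto_atTop_add_const_right _ 1
        tendsto_natCast_atTop_atTop).const_mul_atTop hκ)).mul_const L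
    refine squeeze_zero' (Filter.eventually_atTop.2 ⟨1, fun N => hXdot_nonneg⟩)
      (Filter.eventually_atTop.2 ⟨1, fun N hN => ?_⟩) hcoef
    rw [hXdot hN]
    exact mul_le_mul_of_nonneg_left (hmean _).2 (by positivity)

/-- Splitting the option among more agents reduces aggregate manipulation: for
a convex, nondecreasing, `L`-Lipschitz `C¹` payoff `H`, the aggregate
equilibrium trading speed `Ẋ*_N(t,p) = (λ/(κ(N+1))) ∂ₚ v⁽ᴺ⁾(t,p)` built from
the Cole–Hopf solution `v⁽ᴺ⁾` (with `B_N = 2λ²N/(κ(N+1)²)`) is nonnegative,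
nonincreasing in `N`, and tends to `0` as `N → ∞`, at every fixed
`(t,p) ∈ (0,T) × ℝ`. -/
theorem stmt_17 (σ lam κ T L : ℝ) (hσ : 0 < σ) (hlam : 0 < lam) (hκ : 0 < κ)
    (hT : 0 < T) (hL : 0 ≤ L)
    (H : ℝ → ℝ) (hH : ContDiff ℝ 1 H) (hconv : ConvexOn ℝ Set.univ H)
    (hmono : Monotone H) (hHL : LipschitzWith L.toNNReal H)
    (B : ℕ → ℝ) (hB : ∀ N : ℕ, B N = 2 * lam ^ 2 * N / (κ * ((N : ℝ) + 1) ^ 2))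
    (v : ℕ → ℝ → ℝ → ℝ)
    (hv : ∀ N : ℕ, 1 ≤ N → ∀ t p : ℝ, v N t p =
      (σ ^ 2 / B N) * Real.log
        (∫ z, Real.exp ((B N / σ ^ 2) * H (p + σ * Real.sqrt (T - t) * z))
          ∂(gaussianReal 0 1)))
    (Xdot : ℕ → ℝ → ℝ → ℝ)
    (hX : ∀ (N : ℕ) (t p : ℝ),
      Xdot N t p = (lam / (κ * ((N : ℝ) + 1))) * deriv (fun q => v N t q) p)
    (t p : ℝ) (ht : t ∈ Set.Ioo (0 : ℝ) T) :
    (∀ N : ℕ, 1 ≤ N → 0 ≤ Xdot N t p) ∧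
    (∀ N M : ℕ, 1 ≤ N → N ≤ M → Xdot M t p ≤ Xdot N t p) ∧
    Filter.Tendsto (fun N : ℕ => Xdot N t p) Filter.atTop (nhds 0) :=
  stmt_17_general σ lam κ T L hσ hlam hκ hL H hH hconv hmono hHL B hB v hv Xdot hX t p
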